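/- Let T = (V,E) be a locally finite rooted tree with edges (κ_e)_{e∈E} i.i.d. exponentially distributed with rate 1, and suppose inf over cutsets Π of Σ_{e∈Π} 1/|e| = 0 (with the convention that 1/0 is replaced by 1, i.e., using 1/(|e|+1)). Then E[MaxFlow(0→∞, ⟨κ_e⟩)] = 0, and hence MaxFlow(0→∞, ⟨κ_e⟩) = 0 almost surely. -/

import Mathlib

open scoped ENNReal NNReal Classical

/-- A locally finite rooted tree, encoded by a parent function: every vertex eventually
reaches the root by iterating `parent`, and every vertex has finitely many children.
Non-root vertices are identified with the edge joining them to their parent. -/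
structure GrowingTree where
  V : Type
  root : V
  parent : V → V
  parent_root : parent root = root
  reaches_root : ∀ v, ∃ n, parent^[n] v = root
  locallyFinite : ∀ v, {w | parent w = v ∧ w ≠ root}.Finite

namespace GrowingTree

variable (T : GrowingTree)

/-- The children of a vertex. -/
noncomputable def children (v : T.V) : Finset T.V := (T.locallyFinite v).toFinset

/-- The depth (distance from the root) of a vertex. -/
noncomputable def depth (v : T.V) : ℕ := Nat.find (T.reaches_root v)

/-- A flow from the root to infinity: at every vertex the value (the flow through the
edge above the vertex, resp. the strength at the root) equals the total flow to the
children. -/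
def IsFlow (θ : T.V → ℝ≥0) : Prop :=
  ∀ v, θ v = ∑ w ∈ T.children v, θ w

/-- The strength of a flow: the total outflow from the root. -/
def strength (θ : T.V → ℝ≥0) : ℝ≥0 := θ T.root

/-- A flow respects the capacities `κ` if it is bounded by `κ` on every edge
(i.e. at every non-root vertex). -/
def Respects (θ : T.V → ℝ≥0) (κ : T.V → ℝ≥0) : Prop :=
  ∀ v, v ≠ T.root → θ v ≤ κ v

/-- The maximal flow from the root to infinity with respect to capacities `κ`. -/
noncomputable def maxFlow (κ : T.V → ℝ≥0) : ℝ≥0∞ :=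
  ⨆ θ : {θ : T.V → ℝ≥0 // T.IsFlow θ ∧ T.Respects θ κ}, (T.strength θ.1 : ℝ≥0∞)

/-- An infinite self-avoiding path starting at the root. -/
def IsRay (r : ℕ → T.V) : Prop :=
  r 0 = T.root ∧ ∀ n, T.parent (r (n + 1)) = r n ∧ r (n + 1) ≠ T.root

/-- A cutset separating the root from infinity: a set of edges (non-root vertices) met by
every infinite self-avoiding path starting at the root. -/
def IsCutset (C : Set T.V) : Prop :=
  T.root ∉ C ∧ ∀ r : ℕ → T.V, T.IsRay r → ∃ n, r (n + 1) ∈ C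

/-- The total capacity of a cutset. -/
noncomputable def cutsetSum (κ : T.V → ℝ≥0) (C : Set T.V) : ℝ≥0∞ :=
  ∑' v : C, (κ v.1 : ℝ≥0∞)

/-- The minimum of the capacities along the path from the root to an edge (inclusive). -/
noncomputable def minCap (κ : T.V → ℝ≥0) (v : T.V) : ℝ≥0 :=
  if h : v = T.root then κ v
  else
    (Finset.range (T.depth v)).inf'
      (by
        rw [Finset.nonempty_range_iff]
        intro h0
        apply h
        have hs : T.parent^[T.depth v] v = T.root := Nat.find_spec (T.reaches_root v)
        rw [h0] at hs
        simpa using hs)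
      (fun k => κ (T.parent^[k] v))

/-- The energy of a flow. -/
noncomputable def energy (θ : T.V → ℝ≥0) : ℝ≥0∞ :=
  ∑' v : {v : T.V // v ≠ T.root}, ((θ v.1 : ℝ≥0∞)) ^ 2

end GrowingTree

/-! A flow is non-increasing away from the root, so on an edge `e` it is at most
`κ^min_e`; and its strength is at most its total value on any cutset, since otherwise the
surplus could be followed down a ray that avoids the cutset. So `MaxFlow ≤ Σ_{e∈Π} κ^min_e`,
and `κ^min_e`, a minimum of `|P_e|` i.i.d. `Exp(1)` variables, has mean `1/|P_e|`.
`MaxFlow` is not known to be measurable; the right-hand sides are measurable majorants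
whose integrals `Σ_{e∈Π} 1/|P_e|` can be made arbitrarily small, which forces
`MaxFlow = 0` almost surely. -/

section

open MeasureTheory ProbabilityTheory Real Set

theorem Finset.measurable_inf' {α δ ι : Type*} [MeasurableSpace α] [MeasurableSpace δ]
    [SemilatticeInf α] [MeasurableInf₂ α] {s : Finset ι} (hs : s.Nonempty) {f : ι → δ → α}
    (hf : ∀ n ∈ s, Measurable (f n)) : Measurable (s.inf' hs f) :=
  Finset.inf'_induction hs _ (fun _ hf _ hg => hf.inf hg) hf

namespace ProbabilityTheory

lemma expMeasure_Iio_zero (r : ℝ) : expMeasure r (Iio 0) = 0 := by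
  rw [expMeasure, gammaMeasure, withDensity_apply _ measurableSet_Iio]
  exact lintegral_exponentialPDF_of_nonpos le_rfl

lemma ae_nonneg_expMeasure (r : ℝ) : ∀ᵐ x ∂expMeasure r, 0 ≤ x := by
  simpa [ae_iff, not_le, ← Iio_def] using expMeasure_Iio_zero r

lemma expMeasure_Ioi {r t : ℝ} (hr : 0 < r) (ht : 0 ≤ t) :
    expMeasure r (Ioi t) = ENNReal.ofReal (exp (-(r * t))) := by
  have := isProbabilityMeasure_expMeasure hr
  have hexp : exp (-(r * t)) ≤ 1 := exp_le_one_iff.mpr (by nlinarith)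
  rw [← compl_Iic, prob_compl_eq_one_sub measurableSet_Iic, ← ofReal_cdf, cdf_expMeasure_eq hr,
    if_pos ht, ← ENNReal.ofReal_one, ← ENNReal.ofReal_sub _ (by linarith), sub_sub_cancel]

variable {Ω ι : Type*} [MeasurableSpace Ω] {P : Measure Ω} {X : ι → Ω → ℝ} {r : ℝ}
  {s : Finset ι}

lemma measure_lt_inf'_of_iIndepFun (hX : ∀ i, Measurable (X i))
    (hind : iIndepFun (fun i : s => X i) P) (hexp : ∀ i ∈ s, P.map (X i) = expMeasure r)
    (hr : 0 < r) (hs : s.Nonempty) {t : ℝ} (ht : 0 ≤ t) :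
    P {ω | t < s.inf' hs X ω} = ENNReal.ofReal (exp (-(s.card * r) * t)) := by
  have hset : {ω | t < s.inf' hs X ω} = ⋂ i : s, X i ⁻¹' Ioi t := by
    ext ω
    simp [Finset.inf'_apply, Finset.lt_inf'_iff]
  rw [hset, hind.meas_iInter fun i => ⟨Ioi t, measurableSet_Ioi, rfl⟩]
  have hfac : ∀ i : s, P (X i ⁻¹' Ioi t) = ENNReal.ofReal (exp (-(r * t))) := fun i => by
    rw [← Measure.map_apply (hX i) measurableSet_Ioi, hexp i i.2, expMeasure_Ioi hr ht]
  rw [Finset.prod_congr rfl fun i _ => hfac i, Finset.prod_const, Finset.card_univ,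
    Fintype.card_coe, ← ENNReal.ofReal_pow (exp_nonneg _), ← exp_nat_mul]
  ring_nf

lemma lintegral_ofReal_inf'_of_iIndepFun (hX : ∀ i, Measurable (X i))
    (hind : iIndepFun (fun i : s => X i) P) (hexp : ∀ i ∈ s, P.map (X i) = expMeasure r)
    (hr : 0 < r) (hs : s.Nonempty) :
    ∫⁻ ω, ENNReal.ofReal (s.inf' hs X ω) ∂P = ENNReal.ofReal (s.card * r)⁻¹ := by
  have hpos : 0 < (s.card : ℝ) * r := mul_pos (by exact_mod_cast hs.card_pos) hr
  have hnonneg : 0 ≤ᵐ[P] s.inf' hs X := by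
    have h : ∀ i ∈ s, ∀ᵐ ω ∂P, 0 ≤ X i ω := fun i hi =>
      ae_of_ae_map (hX i).aemeasurable (hexp i hi ▸ ae_nonneg_expMeasure r)
    filter_upwards [s.eventually_all.mpr h] with ω hω
    simpa [Finset.inf'_apply] using hω
  have hmeas : Measurable (s.inf' hs X) := Finset.measurable_inf' hs fun i _ => hX i
  rw [lintegral_eq_lintegral_meas_lt P hnonneg hmeas.aemeasurable,
    setLIntegral_congr_fun measurableSet_Ioi fun t ht =>
      measure_lt_inf'_of_iIndepFun hX hind hexp hr hs (le_of_lt ht),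
    ← ofReal_integral_eq_lintegral_ofReal (integrableOn_exp_mul_Ioi (neg_lt_zero.mpr hpos) 0)
      (Filter.Eventually.of_forall fun _ => (exp_pos _).le),
    integral_exp_mul_Ioi (neg_lt_zero.mpr hpos), mul_zero, exp_zero, neg_div_neg_eq, one_div]

end ProbabilityTheory

lemma ENNReal.countable_of_tsum_ne_top {α : Type*} {f : α → ℝ≥0∞} (hf : ∀ a, f a ≠ 0)
    (h : ∑' a, f a ≠ ⊤) : Countable α := by
  rw [← Set.countable_univ_iff]
  exact (Summable.countable_support_ennreal h).mono fun a _ => hf a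

lemma MeasureTheory.ae_eq_zero_of_forall_exists_measurable_ge {Ω : Type*} [MeasurableSpace Ω]
    {μ : Measure Ω} {f : Ω → ℝ≥0∞}
    (h : ∀ ε > 0, ∃ g : Ω → ℝ≥0∞, Measurable g ∧ f ≤ g ∧ ∫⁻ ω, g ω ∂μ ≤ ε) : f =ᵐ[μ] 0 := by
  choose g hg hfg hgε using fun n : ℕ => h _ (ENNReal.inv_pos.mpr (ENNReal.natCast_ne_top n))
  have hinf : ∫⁻ ω, ⨅ n, g n ω ∂μ = 0 :=
    le_antisymm (ge_of_tendsto' ENNReal.tendsto_inv_nat_nhds_zero fun n =>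
      (lintegral_mono fun ω => iInf_le _ n).trans (hgε n)) zero_le
  filter_upwards [(lintegral_eq_zero_iff (Measurable.iInf hg)).mp hinf] with ω hω
  exact le_antisymm ((le_iInf fun n => hfg n ω).trans hω.le) zero_le

end

namespace GrowingTree

variable {T : GrowingTree}

lemma iterate_parent_root (n : ℕ) : T.parent^[n] T.root = T.root :=
  Function.iterate_fixed T.parent_root n

lemma iterate_parent_eq_root_of_le {u : T.V} {n k : ℕ} (hn : T.parent^[n] u = T.root)
    (hk : n ≤ k) : T.parent^[k] u = T.root := by
  obtain ⟨j, rfl⟩ := Nat.exists_eq_add_of_le hk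
  rw [Nat.add_comm, Function.iterate_add_apply, hn, iterate_parent_root]

lemma eq_root_of_isPeriodicPt {u : T.V} {m : ℕ} (hm : 0 < m)
    (h : Function.IsPeriodicPt T.parent m u) : u = T.root := by
  obtain ⟨n, hn⟩ := T.reaches_root u
  rw [← (h.mul_const n).eq]
  exact iterate_parent_eq_root_of_le hn (Nat.le_mul_of_pos_left n hm)

lemma ne_root_of_lt_depth {v : T.V} {k : ℕ} (h : k < T.depth v) : T.parent^[k] v ≠ T.root :=
  Nat.find_min (T.reaches_root v) h

lemma iterate_parent_depth (v : T.V) : T.parent^[T.depth v] v = T.root :=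
  Nat.find_spec (T.reaches_root v)

lemma depth_pos {v : T.V} (hv : v ≠ T.root) : 0 < T.depth v :=
  Nat.pos_of_ne_zero fun h => hv (by simpa [h] using iterate_parent_depth v)

lemma mem_children {u c : T.V} : c ∈ T.children u ↔ T.parent c = u ∧ c ≠ T.root := by
  simp [children]

def descendants (u : T.V) : Set T.V := {v | ∃ k, T.parent^[k] v = u}

lemma self_mem_descendants (u : T.V) : u ∈ T.descendants u := ⟨0, rfl⟩

lemma parent_mem_descendants {u v : T.V} (h : v ∈ T.descendants u) :
    v ∈ T.descendants (T.parent u) := by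
  obtain ⟨k, rfl⟩ := h
  exact ⟨k + 1, Function.iterate_succ_apply' ..⟩

lemma eq_of_iterate_parent_eq {c c' : T.V} (hc' : c' ≠ T.root)
    (hpar : T.parent c = T.parent c') : ∀ m, T.parent^[m] c = c' → c = c'
  | 0, h => h
  | m + 1, h => by
    have hper : Function.IsPeriodicPt T.parent (m + 1) (T.parent c) := by
      rw [Function.IsPeriodicPt, Function.IsFixedPt, Function.iterate_succ_apply',
        ← Function.iterate_succ_apply, h, hpar]
    rw [Function.iterate_succ_apply, eq_root_of_isPeriodicPt m.succ_pos hper,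
      iterate_parent_root] at h
    exact absurd h.symm hc'

lemma eq_of_mem_descendants {c c' v : T.V} (hc : c ≠ T.root) (hc' : c' ≠ T.root)
    (hpar : T.parent c = T.parent c') (hv : v ∈ T.descendants c)
    (hv' : v ∈ T.descendants c') : c = c' := by
  obtain ⟨a, rfl⟩ := hv
  obtain ⟨b, hb⟩ := hv'
  rcases le_total a b with hab | hab
  · obtain ⟨m, rfl⟩ := Nat.exists_eq_add_of_le hab
    rw [Nat.add_comm, Function.iterate_add_apply] at hb
    exact eq_of_iterate_parent_eq hc' hpar m hb
  · obtain ⟨m, rfl⟩ := Nat.exists_eq_add_of_le hab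
    refine (eq_of_iterate_parent_eq hc hpar.symm m ?_).symm
    rw [← hb, ← Function.iterate_add_apply, Nat.add_comm]

lemma sum_children_indicator_le (f : T.V → ℝ≥0∞) (u v : T.V) :
    ∑ c ∈ T.children u, (T.descendants c).indicator f v ≤ (T.descendants u).indicator f v := by
  by_cases h : ∃ c ∈ T.children u, v ∈ T.descendants c
  · obtain ⟨c, hc, hvc⟩ := h
    have hvu : v ∈ T.descendants u := (mem_children.mp hc).1 ▸ parent_mem_descendants hvc
    rw [Finset.sum_eq_single_of_mem c hc, Set.indicator_of_mem hvc, Set.indicator_of_mem hvu]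
    intro c' hc' hne
    refine Set.indicator_of_notMem (fun hvc' => hne ?_) f
    rw [mem_children] at hc hc'
    exact eq_of_mem_descendants hc'.2 hc.2 (hc'.1.trans hc.1.symm) hvc' hvc
  · push Not at h
    rw [Finset.sum_eq_zero fun c hc => Set.indicator_of_notMem (h c hc) f]
    exact zero_le

lemma exists_isRay_forall {p : T.V → Prop} (hroot : p T.root)
    (hstep : ∀ u, p u → ∃ c ∈ T.children u, p c) : ∃ r, T.IsRay r ∧ ∀ n, p (r n) := by
  choose next hnext_mem hnext using hstep
  let step : {u // p u} → {u // p u} := fun u => ⟨next u.1 u.2, hnext u.1 u.2⟩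
  refine ⟨fun n => (step^[n] ⟨T.root, hroot⟩).1, ⟨rfl, fun n => ?_⟩, fun n => (step^[n] _).2⟩
  simp only [Function.iterate_succ_apply']
  exact mem_children.mp (hnext_mem _ _)

section Flow

variable {θ : T.V → ℝ≥0}

lemma IsFlow.le_parent (hθ : T.IsFlow θ) (w : T.V) : θ w ≤ θ (T.parent w) := by
  by_cases hw : w = T.root
  · rw [hw, T.parent_root]
  rw [hθ (T.parent w)]
  exact Finset.single_le_sum (fun _ _ => zero_le) (mem_children.mpr ⟨rfl, hw⟩)

lemma IsFlow.le_iterate_parent (hθ : T.IsFlow θ) (w : T.V) (k : ℕ) :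
    θ w ≤ θ (T.parent^[k] w) := by
  induction k with
  | zero => rfl
  | succ k ih => exact ih.trans (Function.iterate_succ_apply' T.parent k w ▸ hθ.le_parent _)

lemma IsFlow.le_minCap (hθ : T.IsFlow θ) {κ : T.V → ℝ≥0} (hθκ : T.Respects θ κ) {v : T.V}
    (hv : v ≠ T.root) : θ v ≤ T.minCap κ v := by
  rw [minCap, dif_neg hv]
  refine Finset.le_inf' _ _ fun k hk => ?_
  have hk := ne_root_of_lt_depth (Finset.mem_range.mp hk)
  exact (hθ.le_iterate_parent v k).trans (hθκ _ hk)

/-- If the flow through the root exceeded the flow through a cutset, the surplus would pass to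
some child at every step, producing a ray that avoids the cutset. -/
theorem IsFlow.root_le_tsum_of_isCutset (hθ : T.IsFlow θ) {C : Set T.V} (hC : T.IsCutset C) :
    (θ T.root : ℝ≥0∞) ≤ ∑' v : C, (θ v : ℝ≥0∞) := by
  set S : T.V → ℝ≥0∞ := fun u =>
    ∑' v : C, (T.descendants u).indicator (fun w => (θ w : ℝ≥0∞)) v
  have hS_le : ∀ u, ∑ c ∈ T.children u, S c ≤ S u := fun u => by
    rw [← Summable.tsum_finsetSum fun _ _ => ENNReal.summable]
    exact ENNReal.tsum_le_tsum fun v => sum_children_indicator_le _ u v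
  have hstep : ∀ u, S u < θ u → ∃ c ∈ T.children u, S c < θ c := fun u hu => by
    by_contra! h
    refine hu.not_ge (le_trans ?_ (hS_le u))
    rw [hθ u, ENNReal.ofNNReal_finsetSum]
    exact Finset.sum_le_sum h
  by_contra! hlt
  have hroot : S T.root < θ T.root :=
    (ENNReal.tsum_le_tsum fun v : C => Set.indicator_le_self _ _ (v : T.V)).trans_lt hlt
  obtain ⟨r, hr, hrS⟩ := exists_isRay_forall hroot hstep
  obtain ⟨n, hn⟩ := hC.2 r hr
  refine (hrS (n + 1)).not_ge ?_
  calc (θ (r (n + 1)) : ℝ≥0∞)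
      = (T.descendants (r (n + 1))).indicator (fun w => (θ w : ℝ≥0∞)) (r (n + 1)) :=
        (Set.indicator_of_mem (self_mem_descendants _) (fun w => (θ w : ℝ≥0∞))).symm
    _ ≤ S (r (n + 1)) := ENNReal.le_tsum (⟨r (n + 1), hn⟩ : ↥C)

end Flow

lemma IsCutset.coe_ne_root {C : Set T.V} (hC : T.IsCutset C) (v : C) : (v : T.V) ≠ T.root :=
  fun h => hC.1 (h ▸ v.2)

theorem maxFlow_le_tsum_minCap {C : Set T.V} (hC : T.IsCutset C) (κ : T.V → ℝ≥0) :
    T.maxFlow κ ≤ ∑' v : C, (T.minCap κ v : ℝ≥0∞) :=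
  iSup_le fun ⟨_, hθ, hθκ⟩ => (hθ.root_le_tsum_of_isCutset hC).trans <|
    ENNReal.tsum_le_tsum fun v => ENNReal.coe_le_coe.mpr <|
      hθ.le_minCap hθκ (hC.coe_ne_root v)

/-- The set `P_v` of edges on the path from the root to the edge `v`, inclusive. -/
noncomputable def pathToRoot (v : T.V) : Finset T.V :=
  (Finset.range (T.depth v)).image (T.parent^[·] v)

lemma ne_root_of_mem_pathToRoot {v w : T.V} (hw : w ∈ T.pathToRoot v) : w ≠ T.root := by
  obtain ⟨k, hk, rfl⟩ := Finset.mem_image.mp hw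
  exact ne_root_of_lt_depth (Finset.mem_range.mp hk)

lemma card_pathToRoot (v : T.V) : (T.pathToRoot v).card = T.depth v := by
  rw [pathToRoot, Finset.card_image_of_injOn, Finset.card_range]
  intro j hj k hk h
  wlog hjk : j ≤ k generalizing j k
  · exact (this hk hj h.symm (le_of_not_ge hjk)).symm
  obtain ⟨m, rfl⟩ := Nat.exists_eq_add_of_le hjk
  by_contra hm
  have hper : Function.IsPeriodicPt T.parent m (T.parent^[j] v) := by
    rw [Function.IsPeriodicPt, Function.IsFixedPt, ← Function.iterate_add_apply, Nat.add_comm]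
    exact h.symm
  exact ne_root_of_lt_depth (Finset.mem_coe.mp hj |> Finset.mem_range.mp)
    (eq_root_of_isPeriodicPt (by omega) hper)

lemma pathToRoot_nonempty {v : T.V} (hv : v ≠ T.root) : (T.pathToRoot v).Nonempty := by
  rw [← Finset.card_pos, card_pathToRoot]
  exact depth_pos hv

lemma minCap_eq_inf' (κ : T.V → ℝ≥0) {v : T.V} (hv : v ≠ T.root) :
    T.minCap κ v = (T.pathToRoot v).inf' (pathToRoot_nonempty hv) κ := by
  rw [minCap, dif_neg hv]
  exact (Finset.inf'_image _ κ).symm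

lemma coe_minCap_toNNReal (κ : T.V → ℝ) {v : T.V} (hv : v ≠ T.root) :
    (T.minCap (fun u => (κ u).toNNReal) v : ℝ≥0∞) =
      ENNReal.ofReal ((T.pathToRoot v).inf' (pathToRoot_nonempty hv) κ) := by
  rw [minCap_eq_inf' _ hv, ENNReal.ofReal, Finset.apply_inf'_eq_inf'_comp _ _
    fun x y => Real.toNNReal_monotone.map_min]
  rfl

section Random

open MeasureTheory ProbabilityTheory

variable {Ω : Type*} [MeasurableSpace Ω] {P : Measure Ω} {κ : T.V → Ω → ℝ}

lemma measurable_coe_minCap (hmeas : ∀ v, Measurable (κ v)) {v : T.V} (hv : v ≠ T.root) :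
    Measurable fun ω => (T.minCap (fun u => (κ u ω).toNNReal) v : ℝ≥0∞) := by
  simp_rw [coe_minCap_toNNReal _ hv, ← Finset.inf'_apply]
  exact (Finset.measurable_inf' _ fun u _ => hmeas u).ennreal_ofReal

lemma lintegral_coe_minCap (hmeas : ∀ v, Measurable (κ v))
    (hindep : iIndepFun (fun e : {v : T.V // v ≠ T.root} => κ e.1) P)
    (hdist : ∀ v : T.V, v ≠ T.root → Measure.map (κ v) P = expMeasure 1)
    {v : T.V} (hv : v ≠ T.root) :
    ∫⁻ ω, (T.minCap (fun u => (κ u ω).toNNReal) v : ℝ≥0∞) ∂P = 1 / T.depth v := by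
  have hg : Function.Injective fun u : T.pathToRoot v =>
      (⟨u, ne_root_of_mem_pathToRoot u.2⟩ : {w // w ≠ T.root}) := by
    intro u w h
    simp only [Subtype.mk.injEq] at h
    exact Subtype.ext h
  have hind : iIndepFun (fun u : T.pathToRoot v => κ u) P := hindep.precomp hg
  simp_rw [coe_minCap_toNNReal _ hv, ← Finset.inf'_apply]
  rw [lintegral_ofReal_inf'_of_iIndepFun hmeas hind
      (fun u hu => hdist u (ne_root_of_mem_pathToRoot hu)) one_pos,
    card_pathToRoot, mul_one, ENNReal.ofReal_inv_of_pos (Nat.cast_pos.mpr (depth_pos hv)),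
    ENNReal.ofReal_natCast, one_div]

theorem exists_measurable_ge_maxFlow (hmeas : ∀ v, Measurable (κ v))
    (hindep : iIndepFun (fun e : {v : T.V // v ≠ T.root} => κ e.1) P)
    (hdist : ∀ v : T.V, v ≠ T.root → Measure.map (κ v) P = expMeasure 1)
    {C : Set T.V} (hC : T.IsCutset C) (hfin : ∑' v : C, 1 / (T.depth v : ℝ≥0∞) ≠ ⊤) :
    ∃ G : Ω → ℝ≥0∞, Measurable G ∧ (fun ω => T.maxFlow fun v => (κ v ω).toNNReal) ≤ G ∧
      ∫⁻ ω, G ω ∂P = ∑' v : C, 1 / (T.depth v : ℝ≥0∞) := by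
  have : Countable C := ENNReal.countable_of_tsum_ne_top (fun v => by simp) hfin
  have hG (v : C) := measurable_coe_minCap hmeas (hC.coe_ne_root v)
  refine ⟨_, Measurable.tsum hG, fun ω => maxFlow_le_tsum_minCap hC _, ?_⟩
  rw [lintegral_tsum fun v => (hG v).aemeasurable]
  exact tsum_congr fun v => lintegral_coe_minCap hmeas hindep hdist (hC.coe_ne_root v)

end Random

end GrowingTree

open MeasureTheory ProbabilityTheory

theorem maxFlow_eq_zero_of_iInf_cutset_general (T : GrowingTree)
    {Ω : Type*} [MeasurableSpace Ω] (P : Measure Ω)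
    (κ : T.V → Ω → ℝ) (hmeas : ∀ v, Measurable (κ v))
    (hindep : iIndepFun
      (fun e : {v : T.V // v ≠ T.root} => κ e.1) P)
    (hdist : ∀ v : T.V, v ≠ T.root → Measure.map (κ v) P = expMeasure 1)
    (hcut : (⨅ (C : Set T.V) (_ : T.IsCutset C),
      ∑' v : C, (1 / (T.depth v.1 : ℝ≥0∞))) = 0) :
    (∫⁻ ω, T.maxFlow (fun v => Real.toNNReal (κ v ω)) ∂P) = 0 ∧
      ∀ᵐ ω ∂P, T.maxFlow (fun v => Real.toNNReal (κ v ω)) = 0 := by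
  have hae : (fun ω => T.maxFlow fun v => (κ v ω).toNNReal) =ᵐ[P] 0 := by
    refine ae_eq_zero_of_forall_exists_measurable_ge fun ε hε => ?_
    obtain ⟨C, hC, hlt⟩ : ∃ C, T.IsCutset C ∧ ∑' v : C, 1 / (T.depth v : ℝ≥0∞) < ε := by
      rw [← hcut] at hε
      simpa only [iInf_lt_iff, exists_prop] using hε
    obtain ⟨G, hG, hfG, hGint⟩ :=
      GrowingTree.exists_measurable_ge_maxFlow hmeas hindep hdist hC hlt.ne_top
    exact ⟨G, hG, hfG, hGint.trans_le hlt.le⟩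
  exact ⟨(lintegral_congr_ae hae).trans lintegral_zero, hae⟩

/-- If the edge capacities are i.i.d. exponential with rate 1 and the infimum over cutsets
of `Σ_{e ∈ Π} 1/(|e|+1)` vanishes (note `|e| + 1 = depth` of the lower endpoint of `e`),
then the expected maximal flow from the root to infinity is zero, and hence the maximal
flow is zero almost surely. -/
theorem maxFlow_eq_zero_of_iInf_cutset (T : GrowingTree)
    {Ω : Type*} [MeasurableSpace Ω] (P : Measure Ω) [IsProbabilityMeasure P]
    (κ : T.V → Ω → ℝ) (hmeas : ∀ v, Measurable (κ v))
    (hindep : iIndepFun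
      (fun e : {v : T.V // v ≠ T.root} => κ e.1) P)
    (hdist : ∀ v : T.V, v ≠ T.root → Measure.map (κ v) P = expMeasure 1)
    (hcut : (⨅ (C : Set T.V) (_ : T.IsCutset C),
      ∑' v : C, (1 / (T.depth v.1 : ℝ≥0∞))) = 0) :
    (∫⁻ ω, T.maxFlow (fun v => Real.toNNReal (κ v ω)) ∂P) = 0 ∧
      ∀ᵐ ω ∂P, T.maxFlow (fun v => Real.toNNReal (κ v ω)) = 0 :=
  maxFlow_eq_zero_of_iInf_cutset_general T P κ hmeas hindep hdist hcut
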